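/- For sets of partitions A, B ⊆ P_n, one has Sss(A) · Sss(B) = Sss(A + B), where A + B = {λ + μ : λ ∈ A, μ ∈ B}. In particular, for any partitions λ', μ' ∈ P_n with λ' ⊴ λ, μ' ⊴ μ (same sizes) and any permutations σ, τ ∈ 𝔖_n, the partition part(σ(λ') + τ(μ')) is dominated by λ + μ. -/

import Mathlib

open MvPolynomial

/-- The monomial `x^a` in `K[x_1,...,x_n]`. -/
noncomputable def mon (K : Type) [Field K] (n : ℕ) (a : Fin n → ℕ) :
    MvPolynomial (Fin n) K :=
  monomial (Finsupp.equivFunOnFinite.symm a) 1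

/-- A monomial ideal: an ideal generated by monomials. -/
def IsMonomialIdeal (K : Type) [Field K] (n : ℕ)
    (I : Ideal (MvPolynomial (Fin n) K)) : Prop :=
  ∃ S : Set (Fin n → ℕ), I = Ideal.span (mon K n '' S)

/-- A symmetric (`𝔖_n`-fixed) ideal. -/
def IsSymmetricIdeal (K : Type) [Field K] (n : ℕ)
    (I : Ideal (MvPolynomial (Fin n) K)) : Prop :=
  ∀ σ : Equiv.Perm (Fin n), Ideal.map (rename (σ : Fin n → Fin n)) I = I

/-- The exponent vector obtained from `a` by the Borel move `x^a ↦ x^a · x_i / x_j`. -/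
def borelMoveVec (n : ℕ) (a : Fin n → ℕ) (i j : Fin n) : Fin n → ℕ :=
  fun k => if k = i then a k + 1 else if k = j then a k - 1 else a k

/-- A symmetric strongly shifted ideal (sssi). -/
def IsSSSI (K : Type) [Field K] (n : ℕ)
    (I : Ideal (MvPolynomial (Fin n) K)) : Prop :=
  IsMonomialIdeal K n I ∧ IsSymmetricIdeal K n I ∧
    ∀ lam : Fin n → ℕ, Monotone lam → mon K n lam ∈ I →
      ∀ i j : Fin n, i < j → lam i < lam j →
        mon K n (borelMoveVec n lam i j) ∈ I

/-- The dominance order on partitions: `μ ⊴ λ`. -/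
def dominates (n : ℕ) (μ lam : Fin n → ℕ) : Prop :=
  ∀ k : Fin n, ∑ i ∈ Finset.Ici k, μ i ≤ ∑ i ∈ Finset.Ici k, lam i

/-- `Sss(B)`: the smallest symmetric strongly shifted ideal containing the
monomials `x^λ`, `λ ∈ B`. -/
noncomputable def Sss (K : Type) [Field K] (n : ℕ) (B : Set (Fin n → ℕ)) :
    Ideal (MvPolynomial (Fin n) K) :=
  sInf {J | IsSSSI K n J ∧ ∀ lam ∈ B, mon K n lam ∈ J}

/-! A monomial `x^c` lies in `Sss(B)` exactly when `c` is a rearrangement of a partition of the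
same size dominated by some `λ ∈ B`. One inclusion: if `μ ⊴ λ` and `μ ≠ λ`, a single Borel move
keeps `λ` above `μ`, so `x^μ` is reached from `x^λ` by Borel moves and sorting. The other: these
exponents are closed under permutations and Borel moves, hence span an sssi. Dominance in the
permutation-invariant form `∑_{i ∈ S} c_i ≤ (sum of the |S| largest parts of λ)` is additive, and
sums of permutation- and Borel-closed exponent sets are again such sets; this gives both
inclusions of `Sss(A) · Sss(B) = Sss(A + B)`, and the dominance statement is the additivity itself.
-/

open Finset

open scoped Pointwise in
lemma Set.setOf_exists_eq_add {α : Type*} [Add α] (A B : Set α) :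
    {p | ∃ a ∈ A, ∃ b ∈ B, p = a + b} = A + B := by
  ext p
  simp only [Set.mem_ofPred_eq, Set.mem_add, eq_comm]

lemma Nat.exists_maximal_run {P : ℕ → Prop} {n k₀ : ℕ} (h₀ : ¬P 0) (hk₀ : P k₀)
    (hn : ∀ k, n ≤ k → ¬P k) :
    ∃ s t, s < t ∧ t < n ∧ ¬P s ∧ ¬P (t + 1) ∧ ∀ k, s < k → k ≤ t → P k := by
  classical
  set t := Nat.findGreatest P n
  have ht : P t := Nat.findGreatest_spec (not_lt.1 fun h => hn k₀ h.le hk₀) hk₀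
  have htn : t < n := not_le.1 fun h => hn t h ht
  set s := Nat.findGreatest (¬P ·) t
  have hs : ¬P s := Nat.findGreatest_spec (P := (¬P ·)) (Nat.zero_le t) h₀
  exact ⟨s, t, (Nat.findGreatest_le t).lt_of_ne fun h => hs (by rwa [show s = t from h]), htn,
    hs, Nat.findGreatest_is_greatest (Nat.lt_succ_self t) htn,
    fun k h₁ h₂ => not_not.1 (Nat.findGreatest_is_greatest h₁ h₂)⟩

section Dominance

variable {n : ℕ}

def tailSum (v : Fin n → ℕ) (k : ℕ) : ℕ :=
  ∑ i : Fin n with k ≤ i.val, v i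

lemma tailSum_add (v w : Fin n → ℕ) (k : ℕ) :
    tailSum (v + w) k = tailSum v k + tailSum w k := by
  simp [tailSum, sum_add_distrib]

lemma tailSum_zero (v : Fin n → ℕ) : tailSum v 0 = ∑ i, v i := by
  simp [tailSum]

lemma tailSum_of_le (v : Fin n → ℕ) {k : ℕ} (hk : n ≤ k) : tailSum v k = 0 :=
  sum_eq_zero fun i hi => absurd (mem_filter.1 hi).2 (by omega)

lemma tailSum_eq_add_tailSum_succ (v : Fin n → ℕ) {k : ℕ} (hk : k < n) :
    tailSum v k = v ⟨k, hk⟩ + tailSum v (k + 1) := by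
  have : (univ.filter fun i : Fin n => k ≤ i.val) =
      insert ⟨k, hk⟩ (univ.filter fun i : Fin n => k + 1 ≤ i.val) := by
    ext i
    simp only [mem_filter, mem_univ, true_and, mem_insert, Fin.ext_iff]
    omega
  rw [tailSum, this, sum_insert (by simp), tailSum]

lemma eq_of_tailSum_eq {v w : Fin n → ℕ} (h : ∀ k, tailSum v k = tailSum w k) : v = w := by
  funext i
  have := tailSum_eq_add_tailSum_succ v i.isLt
  have := tailSum_eq_add_tailSum_succ w i.isLt
  have := h i
  have := h (i + 1)
  simp only [Fin.eta] at *
  omega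

lemma card_filter_le_val (k : ℕ) : #{i : Fin n | k ≤ i.val} = n - k := by
  have := card_filter_add_card_filter_not (s := (univ : Finset (Fin n)))
    (fun i : Fin n => (i : ℕ) < k)
  simp only [not_lt, Fin.card_filter_val_lt, card_univ, Fintype.card_fin] at this
  omega

lemma dominates_iff_tailSum_le {v w : Fin n → ℕ} :
    dominates n v w ↔ ∀ k, tailSum v k ≤ tailSum w k := by
  have hIci (u : Fin n → ℕ) (k : Fin n) : ∑ i ∈ Ici k, u i = tailSum u k := by
    refine sum_congr ?_ fun _ _ => rfl
    ext i
    simp only [mem_Ici, mem_filter, mem_univ, true_and, Fin.le_def]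
  refine ⟨fun h k => ?_, fun h k => by simpa only [hIci] using h k⟩
  rcases lt_or_ge k n with hk | hk
  · simpa only [hIci] using h ⟨k, hk⟩
  · simp [tailSum_of_le _ hk]

lemma sum_le_sum_of_card_eq {ι M : Type*} [AddCommMonoid M] [LinearOrder M]
    [IsOrderedAddMonoid M] {f : ι → M} {s t : Finset ι} (hst : #s = #t)
    (h : ∀ x ∈ s, ∀ y ∈ t, f x ≤ f y) : ∑ x ∈ s, f x ≤ ∑ y ∈ t, f y := by
  rcases s.eq_empty_or_nonempty with rfl | hs
  · rw [card_empty, eq_comm, card_eq_zero] at hst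
    simp [hst]
  obtain ⟨x₀, hx₀, hmax⟩ := exists_max_image s f hs
  calc ∑ x ∈ s, f x ≤ #s • f x₀ := sum_le_card_nsmul _ _ _ hmax
    _ = #t • f x₀ := by rw [hst]
    _ ≤ ∑ y ∈ t, f y := card_nsmul_le_sum _ _ _ fun y hy => h x₀ hx₀ y hy

lemma Monotone.sum_le_tailSum {p : Fin n → ℕ} (hp : Monotone p) (S : Finset (Fin n)) :
    ∑ i ∈ S, p i ≤ tailSum p (n - #S) := by
  set T : Finset (Fin n) := {i | n - #S ≤ i.val}
  have hST : #S = #T := by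
    have := card_le_univ S
    rw [card_filter_le_val, Fintype.card_fin] at *
    omega
  rw [tailSum, ← sum_inter_add_sum_sdiff S T, ← sum_inter_add_sum_sdiff T S, inter_comm]
  refine add_le_add le_rfl (sum_le_sum_of_card_eq (card_sdiff_comm hST) fun x hx y hy => hp ?_)
  simp only [T, mem_sdiff, mem_filter, mem_univ, true_and] at hx hy
  rw [Fin.le_def]
  omega

/-- Subset-sum form of "the increasing rearrangement of `c` is dominated by `lam`": it is
invariant under permuting `c` and needs no sorting. -/
def PermDominated (c lam : Fin n → ℕ) : Prop :=
  ∀ S : Finset (Fin n), ∑ i ∈ S, c i ≤ tailSum lam (n - #S)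

lemma Monotone.permDominated_self {lam : Fin n → ℕ} (h : Monotone lam) :
    PermDominated lam lam :=
  h.sum_le_tailSum

namespace PermDominated

variable {c lam : Fin n → ℕ}

lemma comp_perm (h : PermDominated c lam) (σ : Equiv.Perm (Fin n)) :
    PermDominated (c ∘ σ) lam := fun S => by
  simpa [sum_map, card_map] using h (S.map σ.toEmbedding)

lemma tailSum_le (h : PermDominated c lam) (k : ℕ) : tailSum c k ≤ tailSum lam k := by
  rcases le_or_gt n k with hk | hk
  · simp [tailSum_of_le _ hk]
  · have := h {i | k ≤ i.val}
    rwa [card_filter_le_val, Nat.sub_sub_self hk.le] at this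

lemma mono {mu : Fin n → ℕ} (h : PermDominated c lam) (hle : ∀ k, tailSum lam k ≤ tailSum mu k) :
    PermDominated c mu :=
  fun S => (h S).trans (hle _)

lemma add {d mu : Fin n → ℕ} (hc : PermDominated c lam) (hd : PermDominated d mu) :
    PermDominated (c + d) (lam + mu) := fun S => by
  simpa only [Pi.add_apply, sum_add_distrib, tailSum_add] using add_le_add (hc S) (hd S)

end PermDominated

lemma sum_borelMoveVec_add {a : Fin n → ℕ} {i j : Fin n} (hij : i ≠ j) (hj : 0 < a j)
    (S : Finset (Fin n)) :
    ∑ k ∈ S, borelMoveVec n a i j k + (if j ∈ S then 1 else 0) =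
      ∑ k ∈ S, a k + (if i ∈ S then 1 else 0) := by
  rw [← sum_ite_eq' S j (fun _ => 1), ← sum_ite_eq' S i (fun _ => 1), ← sum_add_distrib,
    ← sum_add_distrib]
  refine sum_congr rfl fun k _ => ?_
  unfold borelMoveVec
  split_ifs <;> subst_vars <;> omega

lemma sum_borelMoveVec {a : Fin n → ℕ} {i j : Fin n} (hij : i ≠ j) (hj : 0 < a j) :
    ∑ k, borelMoveVec n a i j k = ∑ k, a k := by
  simpa using sum_borelMoveVec_add hij hj univ

lemma sum_sq_borelMoveVec_lt {a : Fin n → ℕ} {i j : Fin n} (hij : i ≠ j) (h : a i + 1 < a j) :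
    ∑ k, borelMoveVec n a i j k ^ 2 < ∑ k, a k ^ 2 := by
  have split (f : Fin n → ℕ) : ∑ k, f k = f i + f j + ∑ k ∈ (univ.erase i).erase j, f k := by
    rw [add_assoc, add_sum_erase _ _ (mem_erase.2 ⟨hij.symm, mem_univ j⟩),
      add_sum_erase _ _ (mem_univ i)]
  have hrest : ∑ k ∈ (univ.erase i).erase j, borelMoveVec n a i j k ^ 2 =
      ∑ k ∈ (univ.erase i).erase j, a k ^ 2 := sum_congr rfl fun k hk => by
    obtain ⟨hkj, hki⟩ : k ≠ j ∧ k ≠ i := ⟨(mem_erase.1 hk).1, (mem_erase.1 (mem_erase.1 hk).2).1⟩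
    simp [borelMoveVec, hki, hkj]
  have hi : borelMoveVec n a i j i = a i + 1 := if_pos rfl
  have hj : borelMoveVec n a i j j = a j - 1 := by simp [borelMoveVec, hij.symm]
  rw [split, split (a · ^ 2), hrest, hi, hj]
  obtain ⟨b, hb⟩ : ∃ b, a j = b + 1 := ⟨a j - 1, by omega⟩
  rw [hb, Nat.add_sub_cancel]
  rw [hb] at h
  nlinarith

lemma PermDominated.borelMoveVec {c lam : Fin n → ℕ} (h : PermDominated c lam) {i j : Fin n}
    (hij : i ≠ j) (hlt : c i < c j) : PermDominated (borelMoveVec n c i j) lam := by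
  intro S
  have hmove := sum_borelMoveVec_add hij (by omega : 0 < c j) S
  by_cases hi : i ∈ S
  · by_cases hj : j ∈ S
    · simp only [hi, hj, if_true] at hmove
      exact (h S).trans' (by omega)
    -- swapping `i` for `j` in `S` gains `c j - c i ≥ 1`, which pays for the extra unit at `i`
    · have hj' : j ∉ S.erase i := fun hm => hj (mem_of_mem_erase hm)
      have hcard : #(insert j (S.erase i)) = #S := by
        rw [card_insert_of_notMem hj', card_erase_add_one hi]
      have hsum := h (insert j (S.erase i))
      rw [hcard, sum_insert hj'] at hsum
      have := add_sum_erase S c hi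
      simp only [hi, hj, if_true, if_false] at hmove
      omega
  · simp only [hi, if_false] at hmove
    exact (h S).trans' (by omega)

/-- Move a unit from the end `t` of a maximal run `(s, t]` of indices where the tail sums of
`mu` and `lam` differ to its start `s`. -/
lemma exists_borelMoveVec_tailSum_le {lam mu : Fin n → ℕ} (hmu : Monotone mu)
    (hsum : ∑ i, mu i = ∑ i, lam i) (hdom : ∀ k, tailSum mu k ≤ tailSum lam k) (hne : mu ≠ lam) :
    ∃ i j : Fin n, i < j ∧ lam i + 1 < lam j ∧
      ∀ k, tailSum mu k ≤ tailSum (borelMoveVec n lam i j) k := by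
  set P : ℕ → Prop := fun k => tailSum mu k < tailSum lam k
  obtain ⟨k₀, hk₀⟩ : ∃ k, P k := by
    by_contra! h
    exact hne (eq_of_tailSum_eq fun k => le_antisymm (hdom k) (not_lt.1 (h k)))
  obtain ⟨s, t, hst, htn, hs, ht₁, hbetween⟩ := Nat.exists_maximal_run (P := P) (n := n)
    (by simp only [P, tailSum_zero, hsum, lt_irrefl, not_false_eq_true]) hk₀
    fun k hk => by simp [P, tailSum_of_le _ hk]
  have ht := hbetween t hst le_rfl
  have hs₁ := hbetween (s + 1) (Nat.lt_succ_self s) hst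
  have hsn : s < n := hst.trans htn
  have hlam_s : lam ⟨s, hsn⟩ < mu ⟨s, hsn⟩ := by
    have := tailSum_eq_add_tailSum_succ lam hsn
    have := tailSum_eq_add_tailSum_succ mu hsn
    have := hdom s
    simp only [P] at hs hs₁
    omega
  have hlam_t : mu ⟨t, htn⟩ < lam ⟨t, htn⟩ := by
    have := tailSum_eq_add_tailSum_succ lam htn
    have := tailSum_eq_add_tailSum_succ mu htn
    have := hdom (t + 1)
    simp only [P] at ht ht₁
    omega
  have hij : (⟨s, hsn⟩ : Fin n) < ⟨t, htn⟩ := Fin.mk_lt_mk.2 hst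
  have hmu_st : mu ⟨s, hsn⟩ ≤ mu ⟨t, htn⟩ := hmu hij.le
  refine ⟨_, _, hij, by omega, fun k => ?_⟩
  have hmove := sum_borelMoveVec_add (a := lam) hij.ne (by omega)
    (univ.filter fun i : Fin n => k ≤ i.val)
  simp only [mem_filter, mem_univ, true_and] at hmove
  change tailSum _ k + _ = tailSum lam k + _ at hmove
  have := hdom k
  rcases le_or_gt k s with hks | hks
  · simp only [hks, hks.trans hst.le, if_true] at hmove
    omega
  rcases le_or_gt k t with hkt | hkt
  · have := hbetween k hks hkt
    simp only [P, hkt, hks.not_ge, if_true, if_false] at hmove this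
    omega
  · simp only [hkt.not_ge, hks.not_ge, if_false] at hmove
    omega

end Dominance

section Monomials

open scoped Pointwise

variable {K : Type} [Field K] {n : ℕ}

lemma mon_add (a b : Fin n → ℕ) : mon K n (a + b) = mon K n a * mon K n b := by
  have : Finsupp.equivFunOnFinite.symm (a + b) =
      Finsupp.equivFunOnFinite.symm a + Finsupp.equivFunOnFinite.symm b := by
    ext i
    simp
  rw [mon, mon, mon, monomial_mul, one_mul, this]

lemma rename_mon (σ : Equiv.Perm (Fin n)) (a : Fin n → ℕ) :
    rename σ (mon K n a) = mon K n (a ∘ σ.symm) := by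
  have : (Finsupp.equivFunOnFinite.symm a).mapDomain σ =
      Finsupp.equivFunOnFinite.symm (a ∘ σ.symm) := by
    ext i
    simp [Finsupp.mapDomain_equiv_apply]
  rw [mon, rename_monomial, mon, this]

lemma IsSymmetricIdeal.mon_comp_mem {J : Ideal (MvPolynomial (Fin n) K)}
    (hJ : IsSymmetricIdeal K n J) {a : Fin n → ℕ} (ha : mon K n a ∈ J) (σ : Equiv.Perm (Fin n)) :
    mon K n (a ∘ σ) ∈ J := by
  rw [← hJ σ.symm, ← σ.symm_symm, ← rename_mon]
  exact Ideal.mem_map_of_mem _ ha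

lemma mon_mem_span_mon_iff {D : Set (Fin n → ℕ)} {c : Fin n → ℕ} :
    mon K n c ∈ Ideal.span (mon K n '' D) ↔ ∃ d ∈ D, d ≤ c := by
  classical
  rw [show mon K n '' D = (monomial · 1) '' (Finsupp.equivFunOnFinite.symm '' D) from
      by rw [Set.image_image]; rfl, mem_ideal_span_monomial_image, mon, support_monomial,
    if_neg one_ne_zero]
  simp only [Finset.mem_singleton, forall_eq, Set.exists_mem_image]
  exact exists_congr fun d => and_congr_right fun _ => Finsupp.le_def.trans (by simp [Pi.le_def])

lemma span_mon_mul_span_mon (D E : Set (Fin n → ℕ)) :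
    Ideal.span (mon K n '' D) * Ideal.span (mon K n '' E) = Ideal.span (mon K n '' (D + E)) := by
  rw [Ideal.span_mul_span', ← Set.image2_mul, Set.image2_image_left, Set.image2_image_right,
    ← Set.image2_add, Set.image_image2]
  simp only [mon_add]

end Monomials

section SymmetricShifted

open scoped Pointwise

variable {K : Type} [Field K] {n : ℕ}

def IsSymmShifted (D : Set (Fin n → ℕ)) : Prop :=
  (∀ σ : Equiv.Perm (Fin n), ∀ c ∈ D, c ∘ σ ∈ D) ∧
    ∀ c ∈ D, ∀ i j : Fin n, i ≠ j → c i < c j → borelMoveVec n c i j ∈ D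

lemma IsSymmShifted.isSSSI_span {D : Set (Fin n → ℕ)} (hD : IsSymmShifted D) :
    IsSSSI K n (Ideal.span (mon K n '' D)) := by
  refine ⟨⟨D, rfl⟩, fun σ => ?_, fun lam _ hmem i j hij hlt => ?_⟩
  · rw [Ideal.map_span, ← Set.image_comp]
    congr 1
    ext x
    simp only [Set.mem_image, Function.comp_apply, rename_mon]
    refine ⟨fun ⟨c, hc, hx⟩ => ⟨_, hD.1 _ c hc, hx⟩, fun ⟨c, hc, hx⟩ => ⟨c ∘ σ, hD.1 σ c hc, ?_⟩⟩
    simpa [Function.comp_assoc] using hx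
  rw [mon_mem_span_mon_iff] at hmem ⊢
  obtain ⟨d, hd, hle⟩ := hmem
  -- either `d` still divides the moved monomial, or `d j = lam j` and `d` admits the same move
  by_cases hdj : d j < lam j
  · refine ⟨d, hd, fun k => ?_⟩
    have hk : d k ≤ lam k := hle k
    show d k ≤ borelMoveVec n lam i j k
    unfold borelMoveVec
    split_ifs <;> subst_vars <;> omega
  · have hi : d i ≤ lam i := hle i
    have hj : d j ≤ lam j := hle j
    have hdij : d i < d j := by omega
    refine ⟨_, hD.2 d hd i j hij.ne hdij, fun k => ?_⟩
    have hk : d k ≤ lam k := hle k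
    show borelMoveVec n d i j k ≤ borelMoveVec n lam i j k
    unfold borelMoveVec
    split_ifs <;> subst_vars <;> omega

lemma borelMoveVec_add_of_pos {a : Fin n → ℕ} (b : Fin n → ℕ) (i : Fin n) {j : Fin n}
    (hj : 0 < a j) : borelMoveVec n (a + b) i j = borelMoveVec n a i j + b := by
  funext k
  simp only [borelMoveVec, Pi.add_apply]
  split_ifs <;> subst_vars <;> omega

lemma IsSymmShifted.add {D E : Set (Fin n → ℕ)} (hD : IsSymmShifted D) (hE : IsSymmShifted E) :
    IsSymmShifted (D + E) := by
  refine ⟨?_, ?_⟩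
  · rintro σ _ ⟨a, ha, b, hb, rfl⟩
    exact ⟨a ∘ σ, hD.1 σ a ha, b ∘ σ, hE.1 σ b hb, rfl⟩
  rintro _ ⟨a, ha, b, hb, rfl⟩ i j hij hlt
  dsimp only at hlt ⊢
  rcases lt_or_ge (a i) (a j) with h | h
  · exact ⟨_, hD.2 a ha i j hij h, b, hb, (borelMoveVec_add_of_pos b i (by omega)).symm⟩
  · have h' : b i < b j := by rw [Pi.add_apply, Pi.add_apply] at hlt; omega
    refine ⟨a, ha, _, hE.2 b hb i j hij h', ?_⟩
    show a + _ = _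
    rw [add_comm a b, borelMoveVec_add_of_pos a i (by omega), add_comm]

/-- Induction on the sum of the squares of the parts, which the Borel moves used here decrease. -/
lemma mon_mem_of_tailSum_le {J : Ideal (MvPolynomial (Fin n) K)} (hsym : IsSymmetricIdeal K n J)
    (hshift : ∀ lam : Fin n → ℕ, Monotone lam → mon K n lam ∈ J →
      ∀ i j : Fin n, i < j → lam i < lam j → mon K n (borelMoveVec n lam i j) ∈ J)
    {lam mu : Fin n → ℕ} (hlam : Monotone lam) (hmem : mon K n lam ∈ J) (hmu : Monotone mu)
    (hsum : ∑ i, mu i = ∑ i, lam i) (hdom : ∀ k, tailSum mu k ≤ tailSum lam k) :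
    mon K n mu ∈ J := by
  induction h : ∑ i, lam i ^ 2 using Nat.strong_induction_on generalizing lam with
  | _ N ih =>
  obtain rfl | hne := eq_or_ne mu lam
  · exact hmem
  obtain ⟨i, j, hij, hlt, hdom'⟩ := exists_borelMoveVec_tailSum_le hmu hsum hdom hne
  set lam' := borelMoveVec n lam i j
  set ρ := Tuple.sort lam'
  have hsorted : Monotone (lam' ∘ ρ) := Tuple.monotone_sort lam'
  have hunsort : lam' = (lam' ∘ ρ) ∘ ρ.symm := by simp [Function.comp_assoc]
  refine ih _ ?_ hsorted (hsym.mon_comp_mem (hshift lam hlam hmem i j hij (by omega)) ρ) ?_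
    (fun k => (hdom' k).trans ?_) rfl
  · exact h ▸ (Equiv.sum_comp ρ (lam' · ^ 2)).trans_lt (sum_sq_borelMoveVec_lt hij.ne hlt)
  · exact hsum.trans ((sum_borelMoveVec hij.ne (by omega)).symm.trans (Equiv.sum_comp ρ lam').symm)
  · have := (hsorted.permDominated_self.comp_perm ρ.symm).tailSum_le k
    rwa [← hunsort] at this

def sssExponents (B : Set (Fin n → ℕ)) : Set (Fin n → ℕ) :=
  {c | ∃ lam ∈ B, ∑ i, c i = ∑ i, lam i ∧ PermDominated c lam}

lemma isSymmShifted_sssExponents (B : Set (Fin n → ℕ)) : IsSymmShifted (sssExponents B) := by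
  refine ⟨fun σ c ⟨lam, hlam, hsum, hdom⟩ => ⟨lam, hlam, ?_, hdom.comp_perm σ⟩,
    fun c ⟨lam, hlam, hsum, hdom⟩ i j hij hlt => ⟨lam, hlam, ?_, hdom.borelMoveVec hij hlt⟩⟩
  · exact (Equiv.sum_comp σ c).trans hsum
  · rw [sum_borelMoveVec hij (by omega), hsum]

lemma mem_sssExponents_self {B : Set (Fin n → ℕ)} {lam : Fin n → ℕ} (hlam : lam ∈ B)
    (hmono : Monotone lam) : lam ∈ sssExponents B :=
  ⟨lam, hlam, rfl, hmono.permDominated_self⟩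

lemma add_sssExponents_subset (A B : Set (Fin n → ℕ)) :
    sssExponents A + sssExponents B ⊆ sssExponents (A + B) := by
  rintro _ ⟨a, ⟨lam, hlam, hsa, hda⟩, b, ⟨mu, hmu, hsb, hdb⟩, rfl⟩
  refine ⟨lam + mu, ⟨lam, hlam, mu, hmu, rfl⟩, ?_, hda.add hdb⟩
  simp only [Pi.add_apply, Finset.sum_add_distrib, hsa, hsb]

lemma IsSSSI.mon_mem_of_mem_sssExponents {J : Ideal (MvPolynomial (Fin n) K)} (hJ : IsSSSI K n J)
    {B : Set (Fin n → ℕ)} (hB : ∀ lam ∈ B, Monotone lam) (hBJ : ∀ lam ∈ B, mon K n lam ∈ J)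
    {c : Fin n → ℕ} (hc : c ∈ sssExponents B) : mon K n c ∈ J := by
  obtain ⟨lam, hlam, hsum, hdom⟩ := hc
  set ρ := Tuple.sort c
  have hsorted : mon K n (c ∘ ρ) ∈ J :=
    mon_mem_of_tailSum_le hJ.2.1 hJ.2.2 (hB lam hlam) (hBJ lam hlam) (Tuple.monotone_sort c)
      ((Equiv.sum_comp ρ c).trans hsum) (hdom.comp_perm ρ).tailSum_le
  simpa [Function.comp_assoc] using hJ.2.1.mon_comp_mem hsorted ρ.symm

lemma Sss_eq_span {B : Set (Fin n → ℕ)} (hB : ∀ lam ∈ B, Monotone lam) :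
    Sss K n B = Ideal.span (mon K n '' sssExponents B) := by
  refine le_antisymm (sInf_le ⟨(isSymmShifted_sssExponents B).isSSSI_span,
    fun lam hlam => Ideal.subset_span ⟨lam, mem_sssExponents_self hlam (hB lam hlam), rfl⟩⟩) ?_
  rw [Ideal.span_le]
  rintro _ ⟨c, hc, rfl⟩
  exact Submodule.mem_sInf.2 fun J ⟨hJ, hBJ⟩ => hJ.mon_mem_of_mem_sssExponents hB hBJ hc

theorem Sss_mul_Sss {A B : Set (Fin n → ℕ)} (hA : ∀ lam ∈ A, Monotone lam)
    (hB : ∀ lam ∈ B, Monotone lam) : Sss K n A * Sss K n B = Sss K n (A + B) := by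
  have hAB : ∀ lam ∈ A + B, Monotone lam := by
    rintro _ ⟨a, ha, b, hb, rfl⟩
    exact (hA a ha).add (hB b hb)
  rw [Sss_eq_span hA, Sss_eq_span hB, span_mon_mul_span_mon]
  refine le_antisymm ?_ (sInf_le ⟨
    ((isSymmShifted_sssExponents A).add (isSymmShifted_sssExponents B)).isSSSI_span, ?_⟩)
  · rw [Sss_eq_span hAB]
    exact Ideal.span_mono (Set.image_mono (add_sssExponents_subset A B))
  · rintro _ ⟨a, ha, b, hb, rfl⟩
    exact Ideal.subset_span ⟨a + b, Set.add_mem_add (mem_sssExponents_self ha (hA a ha))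
      (mem_sssExponents_self hb (hB b hb)), rfl⟩

end SymmetricShifted

lemma dominates_comp_perm_add {n : ℕ} {lam mu lam' mu' : Fin n → ℕ} (hlam' : Monotone lam')
    (hmu' : Monotone mu') (hd : dominates n lam' lam) (hd' : dominates n mu' mu)
    (σ τ ρ : Equiv.Perm (Fin n)) :
    dominates n ((fun k => lam' (σ k) + mu' (τ k)) ∘ ρ) (lam + mu) := by
  rw [dominates_iff_tailSum_le] at hd hd' ⊢
  exact ((((hlam'.permDominated_self.comp_perm σ).mono hd).add
    ((hmu'.permDominated_self.comp_perm τ).mono hd')).comp_perm ρ).tailSum_le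

/-- For sets of partitions `A, B ⊆ P_n`, one has
`Sss(A) · Sss(B) = Sss(A + B)` where `A + B = {λ + μ : λ ∈ A, μ ∈ B}`.
In particular, for partitions `λ' ⊴ λ` and `μ' ⊴ μ` (of the same sizes) and
permutations `σ, τ`, the weakly increasing rearrangement of `σ(λ') + τ(μ')`
is dominated by `λ + μ`. -/
theorem sss_product (K : Type) [Field K] (n : ℕ) (A B : Set (Fin n → ℕ))
    (hA : ∀ lam ∈ A, Monotone lam) (hB : ∀ lam ∈ B, Monotone lam) :
    Sss K n A * Sss K n B = Sss K n {p | ∃ lam ∈ A, ∃ μ ∈ B, p = lam + μ} ∧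
    ∀ lam μ lam' μ' : Fin n → ℕ,
      Monotone lam → Monotone μ → Monotone lam' → Monotone μ' →
      ∑ i, lam' i = ∑ i, lam i → ∑ i, μ' i = ∑ i, μ i →
      dominates n lam' lam → dominates n μ' μ →
      ∀ (σ τ : Equiv.Perm (Fin n)) (p : Fin n → ℕ), Monotone p →
        (∃ ρ : Equiv.Perm (Fin n),
          p = (fun k => lam' (σ k) + μ' (τ k)) ∘ ρ) →
        dominates n p (lam + μ) := by
  refine ⟨Set.setOf_exists_eq_add A B ▸ Sss_mul_Sss hA hB, ?_⟩
  rintro lam μ lam' μ' - - hlam' hμ' - - hd hd' σ τ p - ⟨ρ, rfl⟩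
  exact dominates_comp_perm_add hlam' hμ' hd hd' σ τ ρ
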